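/- arXiv:1602.04586 — 2 statements merged into one kernel-verified Lean document; each statement's English description precedes it below -/
import Mathlib

section
/- If (X,d₁) and (Y,d₂) are bounded metric spaces and f : X → X, g : Y → Y both have the almost average shadowing property, then the product map f × g has the almost average shadowing property with respect to the sup metric on X × Y. -/
open Filter Finset

section Defs
variable {X : Type*} [PseudoMetricSpace X]

/-- `c` is a `δ`-average-chain of `f` from `x` to `y` of length `n`. -/
def avgChain (f : X → X) (δ : ℝ) (x y : X) (n : ℕ) : Prop :=
  ∃ c : ℕ → X, c 0 = x ∧ c n = y ∧ ∃ N : ℕ, 1 ≤ N ∧ N ≤ n ∧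
    ∀ m : ℕ, N ≤ m → m ≤ n →
      (∑ i ∈ Finset.range m, dist (f (c i)) (c (i + 1))) / m < δ

def avgChainTransitive (f : X → X) : Prop :=
  ∀ δ > (0:ℝ), ∀ x y : X, ∃ n : ℕ, avgChain f δ x y n

def avgChainMixing (f : X → X) : Prop :=
  ∀ δ > (0:ℝ), ∀ x y : X, ∃ n₀ : ℕ, ∀ n ≥ n₀, avgChain f δ x y n

/-- `c` is a `δ`-chain of `f` from `x` to `y` of length `n`. -/
def isChain (f : X → X) (δ : ℝ) (x y : X) (n : ℕ) : Prop :=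
  ∃ c : ℕ → X, c 0 = x ∧ c n = y ∧ ∀ i < n, dist (f (c i)) (c (i + 1)) < δ

def chainTransitive (f : X → X) : Prop :=
  ∀ δ > (0:ℝ), ∀ x y : X, ∃ n : ℕ, 0 < n ∧ isChain f δ x y n

def chainMixing (f : X → X) : Prop :=
  ∀ δ > (0:ℝ), ∀ x y : X, ∃ N : ℕ, 0 < N ∧ ∀ n ≥ N, isChain f δ x y n

/-- Chain equivalence: δ-chains both ways, for every δ. -/
def chainEquivalent (f : X → X) (x y : X) : Prop :=
  ∀ δ > (0:ℝ), (∃ n : ℕ, 0 < n ∧ isChain f δ x y n) ∧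
    (∃ n : ℕ, 0 < n ∧ isChain f δ y x n)

def chainRecurrent (f : X → X) (x : X) : Prop := chainEquivalent f x x

/-- almost average shadowing property -/
def ALASP (f : X → X) : Prop :=
  ∀ ε > (0:ℝ), ∃ δ > (0:ℝ), ∀ x : ℕ → X,
    Filter.atTop.limsup
        (fun n : ℕ => (∑ i ∈ Finset.range n, dist (f (x i)) (x (i + 1))) / n) < δ →
    ∃ z : X, Filter.atTop.limsup
        (fun n : ℕ => (∑ i ∈ Finset.range n, dist (f^[i] z) (x i)) / n) < ε

/-- average shadowing property -/
def ASP (f : X → X) : Prop :=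
  ∀ ε > (0:ℝ), ∃ δ > (0:ℝ), ∀ x : ℕ → X,
    (∃ N : ℕ, 0 < N ∧ ∀ n ≥ N, ∀ k : ℕ,
      (∑ i ∈ Finset.range n, dist (f (x (i + k))) (x (i + k + 1))) / n < δ) →
    ∃ z : X, Filter.atTop.limsup
        (fun n : ℕ => (∑ i ∈ Finset.range n, dist (f^[i] z) (x i)) / n) < ε

def shadowingProperty (f : X → X) : Prop :=
  ∀ ε > (0:ℝ), ∃ δ > (0:ℝ), ∀ x : ℕ → X,
    (∀ i : ℕ, dist (f (x i)) (x (i + 1)) < δ) →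
    ∃ z : X, ∀ i : ℕ, dist (f^[i] z) (x i) < ε

/-- upper density of a set of nonnegative integers -/
noncomputable def upperDensity (A : Set ℕ) : ℝ :=
  Filter.atTop.limsup (fun n : ℕ => ((A ∩ Set.Iio n).ncard : ℝ) / n)

end Defs

open scoped Classical in
noncomputable def discMetric (α : Type*) : MetricSpace α where
  dist x y := if x = y then 0 else 1
  dist_self x := by simp
  dist_comm x y := by by_cases h : x = y <;> simp [h, eq_comm]
  dist_triangle x y z := by
    by_cases h1 : x = y <;> by_cases h2 : y = z <;> by_cases h3 : x = z <;> simp_all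
  eq_of_dist_eq_zero := by
    intro x y h
    by_cases hxy : x = y
    · exact hxy
    · simp [hxy] at h

/-! For tolerances `ε / 2` in the factors take `δ = min δ₁ δ₂`. The sup distance dominates each
coordinate distance, so the coordinates of an almost `δ`-average-pseudo-orbit of `f × g` are almost
average pseudo-orbits of `f` and `g`; it is at most the sum of the coordinate distances, so the
pair of their shadowing points `ε`-shadows in average. Boundedness of the spaces keeps every Cesàro
mean involved bounded, which is what makes `limsup` over `ℝ` monotone and subadditive on them. -/

noncomputable def cesaroMean (u : ℕ → ℝ) (n : ℕ) : ℝ := (∑ i ∈ range n, u i) / n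

section CesaroMean

variable {u v : ℕ → ℝ} {C : ℝ}

lemma cesaroMean_nonneg (hu : ∀ i, 0 ≤ u i) (n : ℕ) : 0 ≤ cesaroMean u n :=
  div_nonneg (sum_nonneg fun i _ => hu i) n.cast_nonneg

lemma cesaroMean_le_of_le (hC : 0 ≤ C) (huC : ∀ i, u i ≤ C) (n : ℕ) : cesaroMean u n ≤ C := by
  rcases n.eq_zero_or_pos with rfl | hn
  · simpa [cesaroMean] using hC
  · rw [cesaroMean, div_le_iff₀ (by exact_mod_cast hn)]
    simpa [mul_comm] using sum_le_sum fun i (_ : i ∈ range n) => huC i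

lemma cesaroMean_mono (huv : ∀ i, u i ≤ v i) (n : ℕ) : cesaroMean u n ≤ cesaroMean v n :=
  div_le_div_of_nonneg_right (sum_le_sum fun i _ => huv i) n.cast_nonneg

lemma cesaroMean_add (n : ℕ) : cesaroMean (u + v) n = cesaroMean u n + cesaroMean v n := by
  simp only [cesaroMean, Pi.add_apply, sum_add_distrib, add_div]

lemma isBoundedUnder_le_cesaroMean (huC : ∀ i, u i ≤ C) :
    atTop.IsBoundedUnder (· ≤ ·) (cesaroMean u) :=
  isBoundedUnder_of ⟨max C 0, cesaroMean_le_of_le (le_max_right _ _)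
    fun i => (huC i).trans (le_max_left _ _)⟩

lemma isCoboundedUnder_le_cesaroMean (hu : ∀ i, 0 ≤ u i) :
    atTop.IsCoboundedUnder (· ≤ ·) (cesaroMean u) :=
  isCoboundedUnder_le_of_le atTop (cesaroMean_nonneg hu)

lemma limsup_cesaroMean_mono (hu : ∀ i, 0 ≤ u i) (huv : ∀ i, u i ≤ v i) (hvC : ∀ i, v i ≤ C) :
    atTop.limsup (cesaroMean u) ≤ atTop.limsup (cesaroMean v) :=
  limsup_le_limsup (.of_forall (cesaroMean_mono huv)) (isCoboundedUnder_le_cesaroMean hu)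
    (isBoundedUnder_le_cesaroMean hvC)

lemma limsup_cesaroMean_add_le (hu : ∀ i, 0 ≤ u i) (hv : ∀ i, 0 ≤ v i)
    (huC : ∀ i, u i ≤ C) (hvC : ∀ i, v i ≤ C) :
    atTop.limsup (cesaroMean (u + v)) ≤
      atTop.limsup (cesaroMean u) + atTop.limsup (cesaroMean v) := by
  simp only [funext (cesaroMean_add (u := u) (v := v))]
  exact limsup_add_le (isBoundedUnder_of ⟨0, cesaroMean_nonneg hu⟩)
    (isBoundedUnder_le_cesaroMean huC) (isCoboundedUnder_le_cesaroMean hv)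
    (isBoundedUnder_le_cesaroMean hvC)

end CesaroMean

lemma exists_dist_le_of_isBounded_univ {X : Type*} [PseudoMetricSpace X]
    (h : Bornology.IsBounded (Set.univ : Set X)) : ∃ C, ∀ a b : X, dist a b ≤ C :=
  let ⟨C, hC⟩ := Metric.isBounded_iff.1 h
  ⟨C, fun a b => hC (Set.mem_univ a) (Set.mem_univ b)⟩

namespace Prod

variable {X Y : Type*} [PseudoMetricSpace X] [PseudoMetricSpace Y] (p q : X × Y)

lemma dist_fst_le : dist p.1 q.1 ≤ dist p q := by
  rw [Prod.dist_eq]; exact le_max_left _ _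

lemma dist_snd_le : dist p.2 q.2 ≤ dist p q := by
  rw [Prod.dist_eq]; exact le_max_right _ _

lemma dist_le_dist_fst_add_dist_snd : dist p q ≤ dist p.1 q.1 + dist p.2 q.2 := by
  rw [Prod.dist_eq]; exact max_le_add_of_nonneg dist_nonneg dist_nonneg

end Prod

theorem stmt9_general {X Y : Type*} [MetricSpace X] [MetricSpace Y]
    (hX : Bornology.IsBounded (Set.univ : Set X))
    (hY : Bornology.IsBounded (Set.univ : Set Y))
    (f : X → X) (g : Y → Y)
    (haf : ALASP f) (hag : ALASP g) :
    ALASP (Prod.map f g : X × Y → X × Y) := by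
  intro ε hε
  obtain ⟨δ₁, hδ₁, hf⟩ := haf (ε / 2) (half_pos hε)
  obtain ⟨δ₂, hδ₂, hg⟩ := hag (ε / 2) (half_pos hε)
  obtain ⟨Cx, hCx⟩ := exists_dist_le_of_isBounded_univ hX
  obtain ⟨Cy, hCy⟩ := exists_dist_le_of_isBounded_univ hY
  obtain ⟨C, hC⟩ := exists_dist_le_of_isBounded_univ (X := X × Y)
    (Set.univ_prod_univ ▸ hX.prod hY)
  refine ⟨min δ₁ δ₂, lt_min hδ₁ hδ₂, fun z hz => ?_⟩
  have hz₁ : atTop.limsup (cesaroMean fun i => dist (f (z i).1) (z (i + 1)).1) < δ₁ :=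
    (limsup_cesaroMean_mono (fun _ => dist_nonneg) (fun i => Prod.dist_fst_le _ _)
      (fun i => hC (Prod.map f g (z i)) (z (i + 1)))).trans_lt (hz.trans_le (min_le_left _ _))
  have hz₂ : atTop.limsup (cesaroMean fun i => dist (g (z i).2) (z (i + 1)).2) < δ₂ :=
    (limsup_cesaroMean_mono (fun _ => dist_nonneg) (fun i => Prod.dist_snd_le _ _)
      (fun i => hC (Prod.map f g (z i)) (z (i + 1)))).trans_lt (hz.trans_le (min_le_right _ _))
  obtain ⟨w₁, hw₁⟩ := hf (fun i => (z i).1) hz₁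
  obtain ⟨w₂, hw₂⟩ := hg (fun i => (z i).2) hz₂
  refine ⟨(w₁, w₂), ?_⟩
  calc atTop.limsup (cesaroMean fun i => dist ((Prod.map f g)^[i] (w₁, w₂)) (z i))
      ≤ atTop.limsup (cesaroMean ((fun i => dist (f^[i] w₁) (z i).1) +
          fun i => dist (g^[i] w₂) (z i).2)) :=
        limsup_cesaroMean_mono (fun _ => dist_nonneg)
          (fun i => by
            rw [Prod.map_iterate]; exact Prod.dist_le_dist_fst_add_dist_snd _ _)
          (fun i => add_le_add (hCx _ _) (hCy _ _))
    _ ≤ atTop.limsup (cesaroMean fun i => dist (f^[i] w₁) (z i).1) +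
          atTop.limsup (cesaroMean fun i => dist (g^[i] w₂) (z i).2) :=
        limsup_cesaroMean_add_le (C := max Cx Cy) (fun _ => dist_nonneg) (fun _ => dist_nonneg)
          (fun _ => (hCx _ _).trans (le_max_left _ _)) (fun _ => (hCy _ _).trans (le_max_right _ _))
    _ < ε / 2 + ε / 2 := add_lt_add hw₁ hw₂
    _ = ε := add_halves ε

theorem stmt9 {X Y : Type*} [MetricSpace X] [MetricSpace Y]
    (hX : Bornology.IsBounded (Set.univ : Set X))
    (hY : Bornology.IsBounded (Set.univ : Set Y))
    (f : X → X) (g : Y → Y) (hf : Continuous f) (hg : Continuous g)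
    (haf : ALASP f) (hag : ALASP g) :
    ALASP (Prod.map f g : X × Y → X × Y) :=
  stmt9_general hX hY f g haf hag
end

section
/- If X is a compact metric space and f : X → X is a continuous surjection with the almost average shadowing property, then f is chain mixing. -/
open Filter Finset

/-!
Fix `δ`, a modulus `η` of uniform continuity of `f` for `δ`, and the ALASP constant `δ'` of `η / 3`.
For large `n` put `P = n + 1` and loop with period `P` from `x` along its orbit for about `P / 2`
steps and then along a backward orbit (surjectivity) into `y`. This pseudo-orbit has two jumps per
period, so its average error is at most `4 diam X / P < δ'`, and some `z` shadows it with average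
error `< η / 3`. In some period the orbit of `z` is then on average `η / 3`-close to the loop, hence
`η`-close to it at a time in the forward part and at a later time in the backward part. Leaving the
orbit of `x` for that of `z` at the first time and for the backward orbit of `y` at the second gives
a `δ`-chain from `x` to `y` of length exactly `n`.
-/

open Function

section Cesaro

theorem sum_range_mul_eq_sum_blocks (u : ℕ → ℝ) (K P : ℕ) :
    ∑ i ∈ range (K * P), u i = ∑ k ∈ range K, ∑ j ∈ range P, u (k * P + j) := by
  induction K with
  | zero => simp
  | succ K ih => rw [Nat.succ_mul, sum_range_add, ih, sum_range_succ]

theorem Function.Periodic.sum_range_mul {u : ℕ → ℝ} {P : ℕ} (hu : Periodic u P) (K : ℕ) :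
    ∑ i ∈ range (K * P), u i = K * ∑ j ∈ range P, u j := by
  have hblock (k j : ℕ) : u (k * P + j) = u j := by
    rw [add_comm]; simpa using hu.nat_mul k j
  simp only [sum_range_mul_eq_sum_blocks, hblock, sum_const, card_range, nsmul_eq_mul]

theorem Function.Periodic.limsup_cesaro_le {u : ℕ → ℝ} {P : ℕ} (hu : Periodic u P) (hP : 0 < P)
    (hu0 : ∀ i, 0 ≤ u i) :
    limsup (fun m : ℕ => (∑ i ∈ range m, u i) / m) atTop ≤ 2 * (∑ j ∈ range P, u j) / P := by
  have hS : 0 ≤ ∑ j ∈ range P, u j := sum_nonneg fun j _ => hu0 j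
  refine limsup_le_of_le (isCoboundedUnder_le_of_le atTop fun m =>
    div_nonneg (sum_nonneg fun i _ => hu0 i) m.cast_nonneg)
    (eventually_atTop.mpr ⟨P, fun m hm => ?_⟩)
  have hm : (0 : ℝ) < m := by exact_mod_cast hP.trans_le hm
  have hm_le : m ≤ (m / P + 1) * P := by
    rw [add_one_mul]
    exact (Nat.lt_div_mul_add hP).le
  have hcover : (((m / P + 1) * P : ℕ) : ℝ) ≤ 2 * m := by
    have := Nat.div_mul_le_self m P
    exact_mod_cast (by rw [add_mul]; omega : (m / P + 1) * P ≤ 2 * m)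
  have hsum : ∑ i ∈ range m, u i ≤ (m / P + 1 : ℕ) * ∑ j ∈ range P, u j := by
    rw [← hu.sum_range_mul]
    exact sum_le_sum_of_subset_of_nonneg (range_subset_range.mpr hm_le) fun i _ _ => hu0 i
  rw [div_le_div_iff₀ hm (by exact_mod_cast hP)]
  push_cast at hsum hcover
  nlinarith

theorem exists_block_sum_lt_of_limsup_cesaro_lt {u : ℕ → ℝ} {D ε : ℝ} {P : ℕ} (hP : 0 < P)
    (huD : ∀ i, u i ≤ D) (h : limsup (fun m : ℕ => (∑ i ∈ range m, u i) / m) atTop < ε) :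
    ∃ k, ∑ j ∈ range P, u (k * P + j) < P * ε := by
  have hbdd : IsBoundedUnder (· ≤ ·) atTop fun m : ℕ => (∑ i ∈ range m, u i) / m := by
    refine isBoundedUnder_of_eventually_le (a := D) (eventually_atTop.mpr ⟨1, fun m hm => ?_⟩)
    rw [div_le_iff₀ (by exact_mod_cast hm)]
    simpa [mul_comm] using sum_le_sum fun i (_ : i ∈ range m) => huD i
  obtain ⟨M, hM⟩ := eventually_atTop.mp (eventually_lt_of_limsup_lt h hbdd)
  by_contra! hblock
  have hK : (0 : ℝ) < ((M + 1) * P : ℕ) := by exact_mod_cast Nat.mul_pos M.succ_pos hP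
  have hlow : ((M + 1) * P : ℕ) * ε ≤ ∑ i ∈ range ((M + 1) * P), u i := by
    rw [sum_range_mul_eq_sum_blocks]
    simpa [mul_assoc] using card_nsmul_le_sum (range (M + 1)) _ _ fun k _ => hblock k
  have := hM ((M + 1) * P) (by nlinarith)
  rw [div_lt_iff₀ hK] at this
  linarith

theorem exists_mem_lt_of_sum_range_lt {w : ℕ → ℝ} (hw : ∀ j, 0 ≤ w j) {P : ℕ} {c η : ℝ}
    (h : ∑ j ∈ range P, w j < P * c) {s : Finset ℕ} (hs : s ⊆ range P) (hc : P * c ≤ #s * η) :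
    ∃ j ∈ s, w j < η := by
  by_contra! hge
  have := card_nsmul_le_sum s w η hge
  have := sum_le_sum_of_subset_of_nonneg hs fun j _ _ => hw j
  simp only [nsmul_eq_mul] at *
  linarith

end Cesaro

section Chains

variable {X : Type*} [PseudoMetricSpace X] {f : X → X} {δ : ℝ} {x y w : X} {m n : ℕ}

theorem isChain_iterate (hδ : 0 < δ) (x : X) (n : ℕ) : isChain f δ x (f^[n] x) n :=
  ⟨fun i => f^[i] x, rfl, rfl, fun i _ => by simpa [iterate_succ_apply'] using hδ⟩

theorem isChain_one (h : dist (f x) y < δ) : isChain f δ x y 1 :=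
  ⟨fun i => if i = 0 then x else y, rfl, rfl, fun i hi => by simpa [Nat.lt_one_iff.mp hi] using h⟩

theorem isChain.append (hxy : isChain f δ x y m) (hyw : isChain f δ y w n) :
    isChain f δ x w (m + n) := by
  obtain ⟨c, hc0, hcm, hc⟩ := hxy
  obtain ⟨d, hd0, hdn, hd⟩ := hyw
  refine ⟨fun i => if i ≤ m then c i else d (i - m), by simp [hc0], ?_, fun i hi => ?_⟩
  · rcases n.eq_zero_or_pos with rfl | hn
    · simp [hcm, ← hd0, hdn]
    · simp [hn.ne', hdn]
  rcases lt_or_ge i m with hlt | hge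
  · simpa [hlt.le, Nat.succ_le_of_lt hlt] using hc i hlt
  · have hd' := hd (i - m) (by omega)
    rw [show i - m + 1 = i + 1 - m by omega] at hd'
    obtain rfl | hgt := hge.eq_or_lt
    · simpa [hcm, hd0] using hd'
    · simpa [hgt.not_ge, (hgt.trans (Nat.lt_succ_self i)).not_ge] using hd'

-- orbit of `x` (`t` steps), jump onto the orbit of `z` (`s` steps), jump into the orbit of `w`
-- (`r` steps)
theorem isChain_via_orbit {η : ℝ} (hfη : ∀ a b : X, dist a b < η → dist (f a) (f b) < δ)
    (hδ : 0 < δ) {z : X} {t i s r : ℕ} (hx : dist (f^[t] x) (f^[i] z) < η)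
    (hw : dist (f^[i + 1 + s] z) w < η) : isChain f δ x (f^[r + 1] w) (t + s + r + 2) := by
  have hjump₁ : isChain f δ (f^[t] x) (f^[i + 1] z) 1 :=
    isChain_one (by simpa only [iterate_succ_apply'] using hfη _ _ hx)
  have hzs : isChain f δ (f^[i + 1] z) (f^[i + 1 + s] z) s := by
    have := isChain_iterate (f := f) hδ (f^[i + 1] z) s
    rwa [← iterate_add_apply, add_comm s] at this
  have hjump₂ : isChain f δ (f^[i + 1 + s] z) (f w) 1 := isChain_one (hfη _ _ hw)
  have hwr : isChain f δ (f w) (f^[r + 1] w) r := by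
    simpa only [iterate_succ_apply] using isChain_iterate (f := f) hδ (f w) r
  have := ((((isChain_iterate hδ x t).append hjump₁).append hzs).append hjump₂).append hwr
  rwa [show t + 1 + s + 1 + r = t + s + r + 2 by ring] at this

end Chains

section LoopOrbit

variable {X : Type*} (f g : X → X) (x y : X) (A P : ℕ)

/-- The periodic sequence `x, f x, …, f^[A-1] x, g^[P-1-A] y, …, g y, y, x, f x, …` of period `P`;
for a right inverse `g` of `f` it is a pseudo-orbit of `f` with only two jumps per period. -/
def loopOrbit (i : ℕ) : X :=
  if i % P < A then f^[i % P] x else g^[P - 1 - i % P] y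

theorem loopOrbit_periodic : Periodic (loopOrbit f g x y A P) P := fun i => by
  simp only [loopOrbit, Nat.add_mod_right]

variable {f g x y A P}

theorem loopOrbit_of_lt {t : ℕ} (htA : t < A) (htP : t < P) (k : ℕ) :
    loopOrbit f g x y A P (k * P + t) = f^[t] x := by
  have : (k * P + t) % P = t := by rw [Nat.mul_add_mod_self_right, Nat.mod_eq_of_lt htP]
  simp [loopOrbit, this, htA]

theorem loopOrbit_of_le {j : ℕ} (hAj : A ≤ j) (hjP : j < P) (k : ℕ) :
    loopOrbit f g x y A P (k * P + j) = g^[P - 1 - j] y := by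
  have : (k * P + j) % P = j := by rw [Nat.mul_add_mod_self_right, Nat.mod_eq_of_lt hjP]
  simp [loopOrbit, this, hAj.not_gt]

theorem map_loopOrbit (hg : RightInverse g f) {j : ℕ} (hjP : j + 1 < P) (hjA : j + 1 ≠ A) :
    f (loopOrbit f g x y A P j) = loopOrbit f g x y A P (j + 1) := by
  simp only [loopOrbit, Nat.mod_eq_of_lt hjP, Nat.mod_eq_of_lt (j.lt_succ_self.trans hjP)]
  split_ifs with hj hj₁ hj₁
  · rw [iterate_succ_apply']
  · omega
  · omega
  · rw [show P - 1 - j = P - 1 - (j + 1) + 1 by omega, iterate_succ_apply', hg]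

end LoopOrbit

section LoopOrbitMetric

variable {X : Type*} [PseudoMetricSpace X] {f g : X → X} {x y : X} {A P : ℕ}

theorem sum_dist_loopOrbit_le (hg : RightInverse g f) {D : ℝ} (hD : ∀ a b : X, dist a b ≤ D) :
    ∑ j ∈ range P, dist (f (loopOrbit f g x y A P j)) (loopOrbit f g x y A P (j + 1)) ≤ 2 * D := by
  set jumps := range P ∩ {A - 1, P - 1}
  have hjumps : ∑ j ∈ range P, dist (f (loopOrbit f g x y A P j)) (loopOrbit f g x y A P (j + 1))
      = ∑ j ∈ jumps, dist (f (loopOrbit f g x y A P j)) (loopOrbit f g x y A P (j + 1)) := by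
    refine (sum_subset inter_subset_left fun j hj hj' => ?_).symm
    simp only [mem_inter, mem_range, mem_insert, mem_singleton, not_and, not_or] at hj hj'
    rw [map_loopOrbit hg (by omega) (by omega), dist_self]
  have hcard : (#jumps : ℝ) ≤ 2 := by
    exact_mod_cast (card_le_card inter_subset_right).trans card_le_two
  calc _ = _ := hjumps
    _ ≤ #jumps • D := sum_le_card_nsmul _ _ _ fun j _ => hD _ _
    _ ≤ 2 * D := by
      rw [nsmul_eq_mul]
      exact mul_le_mul_of_nonneg_right hcard (dist_self x ▸ hD x x)

theorem limsup_cesaro_dist_loopOrbit_le (hg : RightInverse g f) (hP : 0 < P) {D : ℝ}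
    (hD : ∀ a b : X, dist a b ≤ D) :
    limsup (fun m : ℕ =>
      (∑ i ∈ range m, dist (f (loopOrbit f g x y A P i)) (loopOrbit f g x y A P (i + 1))) / m)
      atTop ≤ 4 * D / P := by
  have hper : Periodic (fun i => dist (f (loopOrbit f g x y A P i)) (loopOrbit f g x y A P (i + 1)))
      P := fun i => by
    simp only [add_right_comm i P 1, loopOrbit_periodic f g x y A P _]
  refine (hper.limsup_cesaro_le hP fun _ => dist_nonneg).trans ?_
  rw [show 4 * D = 2 * (2 * D) by ring]
  gcongr
  exact sum_dist_loopOrbit_le hg hD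

/-- The forward and the backward part of the loop each fill at least a third of the period, so the
orbit of `z` is `η`-close to the loop somewhere in each; the chain jumps on and off there. -/
theorem isChain_of_sum_dist_loopOrbit_lt (hg : RightInverse g f) {δ η : ℝ}
    (hfη : ∀ a b : X, dist a b < η → dist (f a) (f b) < δ) (hδ : 0 < δ) (hA : P ≤ 3 * A)
    (hA' : P ≤ 3 * (P - 1 - A)) {z : X} {k : ℕ}
    (hz : ∑ j ∈ range P, dist (f^[k * P + j] z) (loopOrbit f g x y A P (k * P + j)) < P * (η / 3)) :
    isChain f δ x y (P - 1) := by
  have hdist : ∀ j, 0 ≤ dist (f^[k * P + j] z) (loopOrbit f g x y A P (k * P + j)) :=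
    fun _ => dist_nonneg
  have hη : 0 < η / 3 :=
    pos_of_mul_pos_right ((sum_nonneg fun j _ => hdist j).trans_lt hz) P.cast_nonneg
  obtain rfl | hP := P.eq_zero_or_pos
  · simp at hz
  obtain ⟨t, ht, hxt⟩ := exists_mem_lt_of_sum_range_lt hdist hz (s := range A) (η := η)
    (range_subset_range.mpr (by omega)) (by
      rw [card_range]
      have : (P : ℝ) ≤ 3 * A := by exact_mod_cast hA
      nlinarith)
  obtain ⟨j, hj, hyj⟩ := exists_mem_lt_of_sum_range_lt hdist hz (s := Ico A (P - 1)) (η := η)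
    (fun j hj => by simp only [mem_Ico, mem_range] at hj ⊢; omega) (by
      rw [Nat.card_Ico]
      have : (P : ℝ) ≤ 3 * (P - 1 - A : ℕ) := by exact_mod_cast hA'
      nlinarith)
  rw [mem_range] at ht
  rw [mem_Ico] at hj
  rw [loopOrbit_of_lt ht (by omega), dist_comm] at hxt
  rw [loopOrbit_of_le hj.1 (by omega), show k * P + j = k * P + t + 1 + (j - t - 1) by omega] at hyj
  have hchain := isChain_via_orbit (r := P - 2 - j) hfη hδ hxt hyj
  rwa [show P - 2 - j + 1 = P - 1 - j by omega, hg.iterate,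
    show t + (j - t - 1) + (P - 2 - j) + 2 = P - 1 by omega] at hchain

end LoopOrbitMetric

theorem stmt11 {X : Type*} [MetricSpace X] [CompactSpace X] (f : X → X)
    (hf : Continuous f) (hs : Function.Surjective f) (h : ALASP f) :
    chainMixing f := by
  intro δ hδ x y
  obtain ⟨η, hη, hfη⟩ :=
    Metric.uniformContinuous_iff.mp (CompactSpace.uniformContinuous_of_continuous hf) δ hδ
  obtain ⟨δ', hδ', hshadow⟩ := h (η / 3) (by positivity)
  set D := Metric.diam (Set.univ : Set X)
  have hD (a b : X) : dist a b ≤ D :=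
    Metric.dist_le_diam_of_mem isCompact_univ.isBounded trivial trivial
  have hg := rightInverse_surjInv hs
  obtain ⟨N, hN⟩ := exists_nat_gt (4 * D / δ')
  refine ⟨N + 8, by omega, fun n hn => ?_⟩
  have hP : (0 : ℝ) < (n + 1 : ℕ) := by positivity
  set p := loopOrbit f (surjInv hs) x y ((n + 1) / 2) (n + 1)
  have herr : limsup (fun m : ℕ => (∑ i ∈ range m, dist (f (p i)) (p (i + 1))) / m) atTop < δ' := by
    refine (limsup_cesaro_dist_loopOrbit_le hg n.succ_pos hD).trans_lt ?_
    rw [div_lt_iff₀ hP, ← div_lt_iff₀' hδ']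
    exact hN.trans (by exact_mod_cast (by omega : N < n + 1))
  obtain ⟨z, hz⟩ := hshadow _ herr
  obtain ⟨k, hk⟩ := exists_block_sum_lt_of_limsup_cesaro_lt n.succ_pos (fun _ => hD _ _) hz
  simpa using isChain_of_sum_dist_loopOrbit_lt hg hfη hδ (by omega) (by omega) hk
end
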